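/- Let S₁, S₂ ∈ ℝ^{N×N} with entries in [0,1], and let D₁ = Diag(S₁1), D₂ = Diag(S₂1) with diagonal entries bounded below by c > 0. Then ‖D₁^{-1}S₁ − D₂^{-1}S₂‖₂ ≤ (1/c + N²/c²)‖S₁ − S₂‖_F. -/
import Mathlib


open Matrix

/-- Frobenius norm of a real matrix. -/
noncomputable def frobNorm {N M : ℕ} (H : Matrix (Fin N) (Fin M) ℝ) : ℝ :=
  Real.sqrt (∑ i, ∑ j, (H i j) ^ 2)

/-- Spectral (operator ℓ₂) norm of a square real matrix. -/
noncomputable def specNorm {N : ℕ} (A : Matrix (Fin N) (Fin N) ℝ) : ℝ :=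
  ‖Matrix.toEuclideanCLM (𝕜 := ℝ) A‖

lemma specNorm_nonneg {N : ℕ} (A : Matrix (Fin N) (Fin N) ℝ) : 0 ≤ specNorm A :=
  norm_nonneg _

lemma specNorm_add_le {N : ℕ} (A B : Matrix (Fin N) (Fin N) ℝ) :
    specNorm (A + B) ≤ specNorm A + specNorm B := by
  unfold specNorm
  rw [map_add]
  exact norm_add_le _ _

lemma specNorm_mul_le {N : ℕ} (A B : Matrix (Fin N) (Fin N) ℝ) :
    specNorm (A * B) ≤ specNorm A * specNorm B := by
  unfold specNorm
  rw [_root_.map_mul]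
  exact norm_mul_le _ _

lemma specNorm_le_of_sq_bound {N : ℕ} (A : Matrix (Fin N) (Fin N) ℝ) {C : ℝ} (hC : 0 ≤ C)
    (h : ∀ x : Fin N → ℝ, ∑ i, (∑ j, A i j * x j) ^ 2 ≤ C ^ 2 * ∑ i, x i ^ 2) :
    specNorm A ≤ C := by
  apply ContinuousLinearMap.opNorm_le_bound _ hC
  intro x
  have hx : ‖x‖ = Real.sqrt (∑ i, x i ^ 2) := by
    rw [EuclideanSpace.norm_eq]
    congr 1
    refine Finset.sum_congr rfl fun i _ => ?_
    rw [Real.norm_eq_abs, sq_abs]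
  have hAx : ‖Matrix.toEuclideanCLM (𝕜 := ℝ) A x‖
      = Real.sqrt (∑ i, (∑ j, A i j * x j) ^ 2) := by
    rw [EuclideanSpace.norm_eq]
    congr 1
    refine Finset.sum_congr rfl fun i _ => ?_
    rw [Real.norm_eq_abs, sq_abs]
    rfl
  rw [hx, hAx]
  calc Real.sqrt (∑ i, (∑ j, A i j * x j) ^ 2)
      ≤ Real.sqrt (C ^ 2 * ∑ i, x i ^ 2) := Real.sqrt_le_sqrt (h x)
    _ = C * Real.sqrt (∑ i, x i ^ 2) := by
        rw [Real.sqrt_mul (sq_nonneg C), Real.sqrt_sq hC]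

/-- Spectral norm is at most the Frobenius norm. -/
lemma specNorm_le_frobNorm {N : ℕ} (A : Matrix (Fin N) (Fin N) ℝ) :
    specNorm A ≤ frobNorm A := by
  have hF : 0 ≤ frobNorm A := Real.sqrt_nonneg _
  apply specNorm_le_of_sq_bound A hF
  intro x
  have hfrob_sq : frobNorm A ^ 2 = ∑ i, ∑ j, (A i j) ^ 2 := by
    rw [frobNorm, Real.sq_sqrt]
    positivity
  rw [hfrob_sq, Finset.sum_mul]
  apply Finset.sum_le_sum
  intro i _
  exact Finset.sum_mul_sq_le_sq_mul_sq Finset.univ (fun j => A i j) x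

lemma specNorm_diagonal_le {N : ℕ} (d : Fin N → ℝ) {b : ℝ} (hb : 0 ≤ b)
    (h : ∀ i, |d i| ≤ b) : specNorm (Matrix.diagonal d) ≤ b := by
  apply specNorm_le_of_sq_bound _ hb
  intro x
  have hdiag : ∀ i : Fin N, (∑ j, Matrix.diagonal d i j * x j) = d i * x i := by
    intro i
    rw [Finset.sum_eq_single i]
    · simp [Matrix.diagonal]
    · intro j _ hj
      simp [Matrix.diagonal, (Ne.symm hj)]
    · simp
  calc ∑ i, (∑ j, Matrix.diagonal d i j * x j) ^ 2
      = ∑ i, (d i * x i) ^ 2 := by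
        refine Finset.sum_congr rfl fun i _ => by rw [hdiag]
    _ ≤ ∑ i, b ^ 2 * x i ^ 2 := by
        apply Finset.sum_le_sum
        intro i _
        rw [mul_pow]
        apply mul_le_mul_of_nonneg_right _ (sq_nonneg _)
        calc d i ^ 2 = |d i| ^ 2 := (sq_abs _).symm
          _ ≤ b ^ 2 := by
              apply sq_le_sq'
              · linarith [abs_nonneg (d i), neg_abs_le (d i), h i]
              · exact h i
    _ = b ^ 2 * ∑ i, x i ^ 2 := by rw [Finset.mul_sum]

/-- With entries of S₁, S₂ in [0,1] and degrees bounded below by c > 0,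
‖D₁⁻¹S₁ − D₂⁻¹S₂‖₂ ≤ (1/c + N²/c²)‖S₁ − S₂‖_F. -/
theorem DinvS_diff_bound (N : ℕ) (c : ℝ) (hc : 0 < c)
    (S₁ S₂ : Matrix (Fin N) (Fin N) ℝ)
    (hS₁ : ∀ i j, S₁ i j ∈ Set.Icc (0 : ℝ) 1)
    (hS₂ : ∀ i j, S₂ i j ∈ Set.Icc (0 : ℝ) 1)
    (hdeg₁ : ∀ i, c ≤ ∑ j, S₁ i j)
    (hdeg₂ : ∀ i, c ≤ ∑ j, S₂ i j) :
    specNorm (Matrix.diagonal (fun i => (∑ j, S₁ i j)⁻¹) * S₁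
        - Matrix.diagonal (fun i => (∑ j, S₂ i j)⁻¹) * S₂)
      ≤ (1 / c + N ^ 2 / c ^ 2) * frobNorm (S₁ - S₂) := by
  set d₁ : Fin N → ℝ := fun i => ∑ j, S₁ i j with hd₁
  set d₂ : Fin N → ℝ := fun i => ∑ j, S₂ i j with hd₂
  set F : ℝ := frobNorm (S₁ - S₂) with hF
  have hF0 : 0 ≤ F := Real.sqrt_nonneg _
  have hFsq : F ^ 2 = ∑ i, ∑ j, (S₁ i j - S₂ i j) ^ 2 := by
    rw [hF, frobNorm, Real.sq_sqrt (by positivity)]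
    simp [Matrix.sub_apply]
  -- entrywise bound: |S₁ i j - S₂ i j| ≤ F
  have hentry : ∀ i j, |S₁ i j - S₂ i j| ≤ F := by
    intro i j
    have h1 : (S₁ i j - S₂ i j) ^ 2 ≤ F ^ 2 := by
      rw [hFsq]
      calc (S₁ i j - S₂ i j) ^ 2 ≤ ∑ k, (S₁ i k - S₂ i k) ^ 2 :=
            Finset.single_le_sum (f := fun k => (S₁ i k - S₂ i k) ^ 2)
              (fun k _ => sq_nonneg _) (Finset.mem_univ j)
        _ ≤ ∑ i', ∑ k, (S₁ i' k - S₂ i' k) ^ 2 :=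
            Finset.single_le_sum (f := fun i' => ∑ k, (S₁ i' k - S₂ i' k) ^ 2)
              (fun i' _ => Finset.sum_nonneg fun k _ => sq_nonneg _) (Finset.mem_univ i)
    calc |S₁ i j - S₂ i j| = Real.sqrt ((S₁ i j - S₂ i j) ^ 2) := (Real.sqrt_sq_eq_abs _).symm
      _ ≤ Real.sqrt (F ^ 2) := Real.sqrt_le_sqrt h1
      _ = F := Real.sqrt_sq hF0
  -- row-sum diff bound: |d₁ i - d₂ i| ≤ N * F
  have hrow : ∀ i, |d₁ i - d₂ i| ≤ N * F := by
    intro i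
    calc |d₁ i - d₂ i| = |∑ j, (S₁ i j - S₂ i j)| := by rw [hd₁, hd₂, Finset.sum_sub_distrib]
      _ ≤ ∑ j, |S₁ i j - S₂ i j| := Finset.abs_sum_le_sum_abs _ _
      _ ≤ ∑ _j : Fin N, F := Finset.sum_le_sum fun j _ => hentry i j
      _ = N * F := by rw [Finset.sum_const, Finset.card_univ, Fintype.card_fin, nsmul_eq_mul]
  have hd₁pos : ∀ i, 0 < d₁ i := fun i => lt_of_lt_of_le hc (hdeg₁ i)
  have hd₂pos : ∀ i, 0 < d₂ i := fun i => lt_of_lt_of_le hc (hdeg₂ i)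
  -- decomposition
  have hdecomp : Matrix.diagonal (fun i => (d₁ i)⁻¹) * S₁ - Matrix.diagonal (fun i => (d₂ i)⁻¹) * S₂
      = Matrix.diagonal (fun i => (d₁ i)⁻¹) * (S₁ - S₂)
        + (Matrix.diagonal (fun i => (d₁ i)⁻¹) - Matrix.diagonal (fun i => (d₂ i)⁻¹)) * S₂ := by
    rw [mul_sub, sub_mul]
    abel
  rw [hdecomp]
  have h1 : specNorm (Matrix.diagonal (fun i => (d₁ i)⁻¹) * (S₁ - S₂)) ≤ (1 / c) * F := by
    calc specNorm (Matrix.diagonal (fun i => (d₁ i)⁻¹) * (S₁ - S₂))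
        ≤ specNorm (Matrix.diagonal (fun i => (d₁ i)⁻¹)) * specNorm (S₁ - S₂) :=
          specNorm_mul_le _ _
      _ ≤ (1 / c) * F := by
          apply mul_le_mul
          · apply specNorm_diagonal_le _ (by positivity)
            intro i
            rw [abs_of_nonneg (le_of_lt (inv_pos.mpr (hd₁pos i)))]
            rw [one_div]
            exact inv_anti₀ hc (hdeg₁ i)
          · exact specNorm_le_frobNorm _
          · exact specNorm_nonneg _
          · positivity
  have h2 : specNorm ((Matrix.diagonal (fun i => (d₁ i)⁻¹)
        - Matrix.diagonal (fun i => (d₂ i)⁻¹)) * S₂) ≤ (N ^ 2 / c ^ 2) * F := by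
    have hdiagsub : Matrix.diagonal (fun i => (d₁ i)⁻¹) - Matrix.diagonal (fun i => (d₂ i)⁻¹)
        = Matrix.diagonal (fun i => (d₁ i)⁻¹ - (d₂ i)⁻¹) := Matrix.diagonal_sub _ _
    rw [hdiagsub]
    have hS₂frob : frobNorm S₂ ≤ N := by
      rw [frobNorm]
      calc Real.sqrt (∑ i, ∑ j, (S₂ i j) ^ 2)
          ≤ Real.sqrt (∑ _i : Fin N, ∑ _j : Fin N, (1 : ℝ)) := by
            apply Real.sqrt_le_sqrt
            apply Finset.sum_le_sum; intro i _
            apply Finset.sum_le_sum; intro j _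
            have := hS₂ i j
            nlinarith [this.1, this.2]
        _ = Real.sqrt ((N : ℝ) ^ 2) := by
            rw [Finset.sum_const, Finset.sum_const, Finset.card_univ, Fintype.card_fin,
              nsmul_eq_mul, nsmul_eq_mul, mul_one]
            congr 1
            ring
        _ = N := Real.sqrt_sq (Nat.cast_nonneg N)
    calc specNorm (Matrix.diagonal (fun i => (d₁ i)⁻¹ - (d₂ i)⁻¹) * S₂)
        ≤ specNorm (Matrix.diagonal (fun i => (d₁ i)⁻¹ - (d₂ i)⁻¹)) * specNorm S₂ :=
          specNorm_mul_le _ _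
      _ ≤ (N * F / c ^ 2) * N := by
          apply mul_le_mul
          · apply specNorm_diagonal_le _ (by positivity)
            intro i
            have e : (d₁ i)⁻¹ - (d₂ i)⁻¹ = (d₂ i - d₁ i) / (d₁ i * d₂ i) := by
              rw [inv_sub_inv (ne_of_gt (hd₁pos i)) (ne_of_gt (hd₂pos i))]
            rw [e, abs_div]
            rw [abs_of_pos (mul_pos (hd₁pos i) (hd₂pos i))]
            rw [div_le_div_iff₀ (mul_pos (hd₁pos i) (hd₂pos i)) (by positivity)]
            have h3 : |d₂ i - d₁ i| ≤ N * F := by rw [abs_sub_comm]; exact hrow i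
            have h4 : c ^ 2 ≤ d₁ i * d₂ i := by
              have := hdeg₁ i; have := hdeg₂ i
              nlinarith
            nlinarith [abs_nonneg (d₂ i - d₁ i), mul_pos (hd₁pos i) (hd₂pos i)]
          · exact (specNorm_le_frobNorm _).trans hS₂frob
          · exact specNorm_nonneg _
          · positivity
      _ = (N ^ 2 / c ^ 2) * F := by ring
  calc specNorm (Matrix.diagonal (fun i => (d₁ i)⁻¹) * (S₁ - S₂)
        + (Matrix.diagonal (fun i => (d₁ i)⁻¹) - Matrix.diagonal (fun i => (d₂ i)⁻¹)) * S₂)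
      ≤ specNorm (Matrix.diagonal (fun i => (d₁ i)⁻¹) * (S₁ - S₂))
        + specNorm ((Matrix.diagonal (fun i => (d₁ i)⁻¹)
          - Matrix.diagonal (fun i => (d₂ i)⁻¹)) * S₂) := specNorm_add_le _ _
    _ ≤ (1 / c) * F + (N ^ 2 / c ^ 2) * F := add_le_add h1 h2
    _ = (1 / c + N ^ 2 / c ^ 2) * F := by ring
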